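/- arXiv:2104.09038 — 3 statements merged into one kernel-verified Lean document; each statement's English description precedes it below -/
import Mathlib

section
/- Strong duality for restricted tester discrimination: let C ⊆ Pos^M be a closed convex cone and S a compact convex subset of positive semidefinite matrices, with feasible set P' = {Φ ∈ C : Σₘ Φₘ ∈ S} nonempty. Then the maximum over Φ ∈ P' of Σₘ ⟨Φₘ, Ẽₘ⟩ equals the infimum over all Hermitian χ satisfying Σₘ ⟨Φₘ, χ − Ẽₘ⟩ ≥ 0 for all Φ ∈ C of D_S(χ) := max_{φ∈S} ⟨φ, χ⟩. -/
/-!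
Weak duality is immediate: for dual-feasible `χ`, `Σₘ ⟨Φₘ, Ẽₘ⟩ ≤ ⟨Σₘ Φₘ, χ⟩ ≤ D_S(χ)`.
Conversely, for `q` above the primal value, the point `(0, q)` lies outside the convex set
`A = {(Σₘ Φₘ - σ, t) : Φ ∈ C, σ ∈ S, t ≤ Σₘ ⟨Φₘ, Ẽₘ⟩}`, which is closed because positivity bounds
each `Φₘ` by `tr (Σₘ Φₘ)`. A separating hyperplane has negative `t`-coefficient; normalised, its
matrix part is a real functional `re tr (· χ)` with `χ` Hermitian. Scaling `Φ` along the cone `C`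
turns the separation inequality into dual feasibility of `χ`, and `Φ = 0` gives `D_S(χ) ≤ q`.
-/

open Matrix Filter Topology Pointwise
open scoped ComplexOrder

section ConicDuality

variable {V W : Type*} [AddCommGroup V] [Module ℝ V] [AddCommGroup W] [Module ℝ W]

def residualValueSet (L : V →ₗ[ℝ] W) (e : V →ₗ[ℝ] ℝ) (C : Set V) (S : Set W) : Set (W × ℝ) :=
  {z | ∃ Φ ∈ C, ∃ σ ∈ S, z.1 = L Φ - σ ∧ z.2 ≤ e Φ}

variable {L : V →ₗ[ℝ] W} {e : V →ₗ[ℝ] ℝ} {C : Set V} {S : Set W}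

lemma convex_residualValueSet (hC : Convex ℝ C) (hS : Convex ℝ S) :
    Convex ℝ (residualValueSet L e C S) := by
  rintro ⟨_, t₁⟩ ⟨Φ₁, hΦ₁, σ₁, hσ₁, rfl, ht₁⟩ ⟨_, t₂⟩ ⟨Φ₂, hΦ₂, σ₂, hσ₂, rfl, ht₂⟩ a b ha hb hab
  refine ⟨a • Φ₁ + b • Φ₂, hC hΦ₁ hΦ₂ ha hb hab, a • σ₁ + b • σ₂, hS hσ₁ hσ₂ ha hb hab, ?_, ?_⟩
  · simp only [Prod.fst_add, Prod.smul_fst, map_add, map_smul]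
    module
  · simp only [Prod.snd_add, Prod.smul_snd, map_add, map_smul, smul_eq_mul]
    gcongr

lemma isClosed_residualValueSet [TopologicalSpace V] [TopologicalSpace W]
    [FirstCountableTopology V] [FirstCountableTopology W] [T2Space W] [IsTopologicalAddGroup W]
    (hL : Continuous L) (he : Continuous e) (hS : IsCompact S)
    (hproper : ∀ K, IsCompact K → IsCompact {Φ | Φ ∈ C ∧ L Φ ∈ K}) :
    IsClosed (residualValueSet L e C S) := by
  refine IsSeqClosed.isClosed fun z p hz hzp => ?_
  choose Φ hΦ σ hσ hz₁ hz₂ using hz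
  have hx : Tendsto (fun k => (z k).1) atTop (𝓝 p.1) := (continuous_fst.tendsto p).comp hzp
  set K := insert p.1 (Set.range fun k => (z k).1) + S
  have hK : IsCompact {Ψ | Ψ ∈ C ∧ L Ψ ∈ K} := hproper _ (hx.isCompact_insert_range.add hS)
  have hmem : ∀ k, (Φ k, σ k) ∈ {Ψ | Ψ ∈ C ∧ L Ψ ∈ K} ×ˢ S := fun k =>
    ⟨⟨hΦ k, _, Set.mem_insert_of_mem _ ⟨k, rfl⟩, _, hσ k, by simp only [hz₁, sub_add_cancel]⟩,
      hσ k⟩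
  obtain ⟨⟨Φl, σl⟩, ⟨⟨hΦl, -⟩, hσl⟩, φ, hφ, hlim⟩ := (hK.prod hS).tendsto_subseq hmem
  have hΦlim : Tendsto (Φ ∘ φ) atTop (𝓝 Φl) := (continuous_fst.tendsto _).comp hlim
  have hσlim : Tendsto (σ ∘ φ) atTop (𝓝 σl) := (continuous_snd.tendsto _).comp hlim
  refine ⟨Φl, hΦl, σl, hσl, tendsto_nhds_unique (hx.comp hφ.tendsto_atTop) ?_, ?_⟩
  · simpa only [Function.comp_def, hz₁] using ((hL.tendsto Φl).comp hΦlim).sub hσlim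
  · exact le_of_tendsto_of_tendsto' (((continuous_snd.tendsto p).comp hzp).comp hφ.tendsto_atTop)
      ((he.tendsto Φl).comp hΦlim) fun k => hz₂ (φ k)

lemma nonneg_of_forall_lt_mul {α : Type*} [Field α] [LinearOrder α] [IsStrictOrderedRing α]
    {a b : α} (h : ∀ c, 0 ≤ c → a < c * b) : 0 ≤ b := by
  by_contra! hb
  have ha : a < 0 := by simpa using h 0 le_rfl
  have := h (a / b) (div_nonneg_of_nonpos ha.le hb.le)
  rw [div_mul_cancel₀ a hb.ne] at this
  exact lt_irrefl a this

theorem exists_dual_certificate [TopologicalSpace W] [IsTopologicalAddGroup W]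
    [ContinuousSMul ℝ W] [LocallyConvexSpace ℝ W]
    (hCconv : Convex ℝ C) (hCcone : ∀ Φ ∈ C, ∀ c : ℝ, 0 ≤ c → c • Φ ∈ C) (hSconv : Convex ℝ S)
    (hA : IsClosed (residualValueSet L e C S)) {Φ₀ : V} (hΦ₀ : Φ₀ ∈ C) (hΦ₀S : L Φ₀ ∈ S)
    {q : ℝ} (hq : ∀ Φ ∈ C, L Φ ∈ S → e Φ < q) :
    ∃ y : W →L[ℝ] ℝ, (∀ Φ ∈ C, e Φ ≤ y (L Φ)) ∧ ∀ σ ∈ S, y σ < q := by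
  have hqA : ((0 : W), q) ∉ residualValueSet L e C S := by
    rintro ⟨Φ, hΦ, σ, hσ, h0, hle⟩
    rw [eq_comm, sub_eq_zero] at h0
    exact (hle.trans_lt (hq Φ hΦ (h0 ▸ hσ))).false
  obtain ⟨f, u, hfq, hfA⟩ :=
    geometric_hahn_banach_point_closed (convex_residualValueSet hCconv hSconv) hA hqA
  set g : W →L[ℝ] ℝ := f.comp (ContinuousLinearMap.inl ℝ W ℝ)
  set s := f (0, 1)
  have hf : ∀ x t, f (x, t) = g x + t * s := fun x t => by
    have : (x, t) = ContinuousLinearMap.inl ℝ W ℝ x + t • ((0 : W), (1 : ℝ)) := by simp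
    rw [this, map_add, map_smul, smul_eq_mul, mul_comm]
    rfl
  have hsep : ∀ Φ ∈ C, ∀ σ ∈ S, ∀ t ≤ e Φ, u < g (L Φ) - g σ + t * s := fun Φ hΦ σ hσ t ht => by
    simpa [hf] using hfA (L Φ - σ, t) ⟨Φ, hΦ, σ, hσ, rfl, ht⟩
  rw [hf, map_zero, zero_add] at hfq
  have hs : s < 0 := by
    -- otherwise `f` is at most `f (0, q)` at the point `(0, min (e Φ₀) q)` of the set
    by_contra! hs
    have := hsep Φ₀ hΦ₀ _ hΦ₀S (min (e Φ₀) q) (min_le_left _ _)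
    nlinarith [mul_le_mul_of_nonneg_right (min_le_right (e Φ₀) q) hs]
  have h0 : (0 : V) ∈ C := by simpa using hCcone Φ₀ hΦ₀ 0 le_rfl
  refine ⟨(-s)⁻¹ • g, fun Φ hΦ => ?_, fun σ hσ => ?_⟩
  · have hray : ∀ c : ℝ, 0 ≤ c → u + g (L Φ₀) < c * (g (L Φ) + e Φ * s) := fun c hc => by
      have := hsep _ (hCcone Φ hΦ c hc) _ hΦ₀S _ le_rfl
      simp only [map_smul, smul_eq_mul] at this
      linarith
    have := nonneg_of_forall_lt_mul hray
    rw [_root_.smul_apply, smul_eq_mul, le_inv_mul_iff₀ (by linarith)]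
    linarith
  · have := hsep 0 h0 σ hσ 0 (by simp)
    rw [_root_.smul_apply, smul_eq_mul, inv_mul_lt_iff₀ (by linarith)]
    simp only [map_zero, zero_sub, zero_mul, add_zero] at this
    linarith

end ConicDuality

section MatrixDuality

variable {ι κ : Type*} [Fintype ι] [Fintype κ]

instance : LocallyConvexSpace ℝ (Matrix ι ι ℂ) :=
  inferInstanceAs (LocallyConvexSpace ℝ (ι → ι → ℂ))

instance : FirstCountableTopology (Matrix ι ι ℂ) :=
  inferInstanceAs (FirstCountableTopology (ι → ι → ℂ))

open scoped MatrixOrder in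
lemma Matrix.PosSemidef.norm_apply_le_re_trace {A : Matrix ι ι ℂ} (hA : A.PosSemidef) (i j : ι) :
    ‖A i j‖ ≤ A.trace.re := by
  classical
  have hdiag_le : ∀ k, (A k k).re ≤ A.trace.re := fun k => by
    rw [trace, Complex.re_sum]
    exact Finset.single_le_sum (f := fun l => (A l l).re)
      (fun l _ => (Complex.nonneg_iff.mp hA.diag_nonneg).1)
      (Finset.mem_univ k)
  obtain ⟨B, rfl⟩ := CStarAlgebra.nonneg_iff_eq_star_mul_self.mp hA.nonneg
  have hdiag : ∀ k, ((star B * B) k k).re = ∑ l, ‖B l k‖ ^ 2 := fun k => by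
    simp [mul_apply, Complex.re_sum, ← Complex.normSq_eq_norm_sq, Complex.normSq_apply]
  calc ‖(star B * B) i j‖ ≤ ∑ k, ‖B k i‖ * ‖B k j‖ := by
        simpa [mul_apply] using (norm_sum_le _ _).trans_eq (by simp)
    _ ≤ ∑ k, (‖B k i‖ ^ 2 + ‖B k j‖ ^ 2) / 2 := Finset.sum_le_sum fun k _ => by
        nlinarith [sq_nonneg (‖B k i‖ - ‖B k j‖)]
    _ = (((star B * B) i i).re + ((star B * B) j j).re) / 2 := by
        rw [hdiag, hdiag, ← Finset.sum_add_distrib, Finset.sum_div]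
    _ ≤ (star B * B).trace.re := by linarith [hdiag_le i, hdiag_le j]

section SupNorm

attribute [local instance] Matrix.normedAddCommGroup Matrix.normedSpace

lemma isCompact_setOf_mem_and_sum_mem {C : Set (κ → Matrix ι ι ℂ)} (hC : IsClosed C)
    (hCpos : ∀ Φ ∈ C, ∀ m, (Φ m).PosSemidef) {K : Set (Matrix ι ι ℂ)} (hK : IsCompact K) :
    IsCompact {Φ | Φ ∈ C ∧ ∑ m, Φ m ∈ K} := by
  obtain ⟨T, hT⟩ := (hK.image (Complex.continuous_re.comp continuous_id.matrix_trace)).bddAbove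
  refine Metric.isCompact_of_isClosed_isBounded
    (hC.inter (hK.isClosed.preimage (continuous_finsetSum _ fun m _ => continuous_apply m))) ?_
  refine isBounded_iff_forall_norm_le.2 ⟨T, fun Φ ⟨hΦ, hΦK⟩ => ?_⟩
  have htr : ∑ m, (Φ m).trace.re ≤ T := by
    simpa [trace_sum, Complex.re_sum] using hT ⟨_, hΦK, rfl⟩
  have hnonneg : ∀ m, 0 ≤ (Φ m).trace.re := fun m =>
    (Complex.nonneg_iff.mp (hCpos Φ hΦ m).trace_nonneg).1
  have hle : ∀ m, (Φ m).trace.re ≤ T := fun m =>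
    (Finset.single_le_sum (fun l _ => hnonneg l) (Finset.mem_univ m)).trans htr
  have hT0 : 0 ≤ T := (Finset.sum_nonneg fun l _ => hnonneg l).trans htr
  refine (pi_norm_le_iff_of_nonneg hT0).2 fun m => (Matrix.norm_le_iff hT0).2 fun i j => ?_
  exact ((hCpos Φ hΦ m).norm_apply_le_re_trace i j).trans (hle m)

end SupNorm

noncomputable def reTraceMulForm : LinearMap.BilinForm ℝ (Matrix ι ι ℂ) :=
  LinearMap.mk₂ ℝ (fun χ x => (x * χ).trace.re) (by simp [mul_add]) (by simp)
    (by simp [add_mul]) (by simp)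

lemma reTraceMulForm_apply (χ x : Matrix ι ι ℂ) : reTraceMulForm χ x = (x * χ).trace.re := rfl

lemma reTraceMulForm_injective : Function.Injective (reTraceMulForm (ι := ι)) := by
  refine (injective_iff_map_eq_zero _).2 fun χ hχ => ?_
  have h := LinearMap.congr_fun hχ χᴴ
  have hnonneg := (posSemidef_conjTranspose_mul_self χ).trace_nonneg
  rw [reTraceMulForm_apply, LinearMap.zero_apply] at h
  rw [← trace_conjTranspose_mul_self_eq_zero_iff]
  exact Complex.ext h (Complex.nonneg_iff.mp hnonneg).2.symm

lemma exists_isHermitian_forall_re_trace_mul_eq (f : Module.Dual ℝ (Matrix ι ι ℂ)) :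
    ∃ χ : Matrix ι ι ℂ, χ.IsHermitian ∧ ∀ x : Matrix ι ι ℂ, x.IsHermitian →
      f x = (x * χ).trace.re := by
  obtain ⟨χ, rfl⟩ := (LinearMap.injective_iff_surjective_of_finrank_eq_finrank
    Subspace.dual_finrank_eq.symm).1 reTraceMulForm_injective f
  refine ⟨(2⁻¹ : ℝ) • (χ + χᴴ), (isHermitian_add_transpose_self χ).smul (by simp), fun x hx => ?_⟩
  have : (x * χᴴ).trace.re = (x * χ).trace.re := by
    rw [show x * χᴴ = (χ * x)ᴴ by rw [conjTranspose_mul, hx.eq], trace_conjTranspose,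
      trace_mul_comm, Complex.star_def, Complex.conj_re]
  rw [reTraceMulForm_apply, Matrix.mul_smul, mul_add, trace_smul, trace_add, Complex.smul_re,
    Complex.add_re, this]
  ring

noncomputable def traceSupport (S : Set (Matrix ι ι ℂ)) (χ : Matrix ι ι ℂ) : ℝ :=
  sSup {t : ℝ | ∃ φ ∈ S, t = ((φ * χ).trace).re}

lemma re_trace_mul_le_traceSupport {S : Set (Matrix ι ι ℂ)} (hS : IsCompact S) (χ : Matrix ι ι ℂ)
    {φ : Matrix ι ι ℂ} (hφ : φ ∈ S) : ((φ * χ).trace).re ≤ traceSupport S χ := by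
  refine le_csSup ?_ ⟨φ, hφ, rfl⟩
  obtain ⟨T, hT⟩ := (hS.image (Complex.continuous_re.comp
    (continuous_id.mul continuous_const).matrix_trace)).bddAbove
  exact ⟨T, by rintro _ ⟨ψ, hψ, rfl⟩; exact hT ⟨ψ, hψ, rfl⟩⟩

lemma traceSupport_le {S : Set (Matrix ι ι ℂ)} (hS : S.Nonempty) {χ : Matrix ι ι ℂ} {q : ℝ}
    (h : ∀ φ ∈ S, ((φ * χ).trace).re ≤ q) : traceSupport S χ ≤ q := by
  obtain ⟨φ, hφ⟩ := hS
  exact csSup_le ⟨_, φ, hφ, rfl⟩ (by rintro _ ⟨ψ, hψ, rfl⟩; exact h ψ hψ)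

def sumMap : (κ → Matrix ι ι ℂ) →ₗ[ℝ] Matrix ι ι ℂ where
  toFun Φ := ∑ m, Φ m
  map_add' _ _ := Finset.sum_add_distrib
  map_smul' _ _ := by simp [Finset.smul_sum]

noncomputable def traceObjective (E : κ → Matrix ι ι ℂ) : (κ → Matrix ι ι ℂ) →ₗ[ℝ] ℝ where
  toFun Φ := ∑ m, ((Φ m * E m).trace).re
  map_add' _ _ := by simp [add_mul, Finset.sum_add_distrib]
  map_smul' _ _ := by simp [Finset.mul_sum]

lemma sum_re_trace_mul_sub (Φ E : κ → Matrix ι ι ℂ) (χ : Matrix ι ι ℂ) :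
    ∑ m, ((Φ m * (χ - E m)).trace).re
      = ((∑ m, Φ m) * χ).trace.re - ∑ m, ((Φ m * E m).trace).re := by
  simp [mul_sub, Finset.sum_mul, trace_sum, Complex.re_sum]

theorem exists_dualFeasible_traceSupport_le (E : κ → Matrix ι ι ℂ) {C : Set (κ → Matrix ι ι ℂ)}
    (hCpos : ∀ Φ ∈ C, ∀ m, (Φ m).PosSemidef) (hCclosed : IsClosed C) (hCconv : Convex ℝ C)
    (hCcone : ∀ Φ ∈ C, ∀ c : ℝ, 0 ≤ c → c • Φ ∈ C) {S : Set (Matrix ι ι ℂ)}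
    (hSpos : ∀ φ ∈ S, φ.PosSemidef) (hScompact : IsCompact S) (hSconv : Convex ℝ S)
    {Φ₀ : κ → Matrix ι ι ℂ} (hΦ₀ : Φ₀ ∈ C) (hΦ₀S : ∑ m, Φ₀ m ∈ S) {q : ℝ}
    (hq : ∀ Φ ∈ C, ∑ m, Φ m ∈ S → ∑ m, ((Φ m * E m).trace).re < q) :
    ∃ χ : Matrix ι ι ℂ, χ.IsHermitian ∧ (∀ Φ ∈ C, 0 ≤ ∑ m, ((Φ m * (χ - E m)).trace).re) ∧
      traceSupport S χ ≤ q := by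
  have hA : IsClosed (residualValueSet sumMap (traceObjective E) C S) :=
    isClosed_residualValueSet (LinearMap.continuous_of_finiteDimensional _)
      (LinearMap.continuous_of_finiteDimensional _) hScompact
      fun _ hK => isCompact_setOf_mem_and_sum_mem hCclosed hCpos hK
  obtain ⟨y, hyC, hyS⟩ := exists_dual_certificate hCconv hCcone hSconv hA hΦ₀ hΦ₀S hq
  obtain ⟨χ, hχ, hχy⟩ := exists_isHermitian_forall_re_trace_mul_eq y.toLinearMap
  refine ⟨χ, hχ, fun Φ hΦ => ?_, traceSupport_le ⟨_, hΦ₀S⟩ fun φ hφ => ?_⟩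
  · rw [sum_re_trace_mul_sub, ← hχy _ (posSemidef_sum _ fun m _ => hCpos Φ hΦ m).1]
    exact sub_nonneg.2 (hyC Φ hΦ)
  · rw [← hχy _ (hSpos φ hφ).1]
    exact (hyS φ hφ).le

end MatrixDuality

lemma csSup_eq_csInf_of_forall_le_of_forall_le_add {P D : Set ℝ} (hP : P.Nonempty)
    (hPD : ∀ a ∈ P, ∀ b ∈ D, a ≤ b) (hD : ∀ ε > 0, ∃ b ∈ D, b ≤ sSup P + ε) :
    sSup P = sInf D := by
  obtain ⟨b, hb, -⟩ := hD 1 one_pos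
  have hPD' : ∀ b ∈ D, sSup P ≤ b := fun b hb => csSup_le hP fun a ha => hPD a ha b hb
  refine le_antisymm (le_csInf ⟨b, hb⟩ hPD') (le_of_forall_pos_le_add fun ε hε => ?_)
  obtain ⟨b, hb, hbε⟩ := hD ε hε
  exact (csInf_le ⟨sSup P, hPD'⟩ hb).trans hbε

theorem stmt_3_general {n M : ℕ}
    (Etil : Fin M → Matrix (Fin n) (Fin n) ℂ)
    (C : Set (Fin M → Matrix (Fin n) (Fin n) ℂ))
    (hCpos : ∀ Φ ∈ C, ∀ m, (Φ m).PosSemidef)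
    (hCclosed : IsClosed C) (hCconv : Convex ℝ C)
    (hCcone : ∀ Φ ∈ C, ∀ c : ℝ, 0 ≤ c → (fun m => (c : ℂ) • Φ m) ∈ C)
    (S : Set (Matrix (Fin n) (Fin n) ℂ))
    (hSpos : ∀ φ ∈ S, φ.PosSemidef) (hScompact : IsCompact S) (hSconv : Convex ℝ S)
    (hfeas_ne : {Φ | Φ ∈ C ∧ (∑ m, Φ m) ∈ S}.Nonempty) :
    sSup {r : ℝ | ∃ Φ, Φ ∈ C ∧ (∑ m, Φ m) ∈ S ∧
        r = ∑ m, ((Φ m * Etil m).trace).re}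
      = sInf {r : ℝ | ∃ χ : Matrix (Fin n) (Fin n) ℂ, χ.IsHermitian ∧
          (∀ Φ ∈ C, 0 ≤ ∑ m, ((Φ m * (χ - Etil m)).trace).re) ∧
          r = sSup {t : ℝ | ∃ φ ∈ S, t = ((φ * χ).trace).re}} := by
  obtain ⟨Φ₀, hΦ₀C, hΦ₀S⟩ := hfeas_ne
  have hcone : ∀ Φ ∈ C, ∀ c : ℝ, 0 ≤ c → c • Φ ∈ C := fun Φ hΦ c hc => by
    have h := hCcone Φ hΦ c hc
    simp only [Complex.coe_smul] at h
    exact h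
  have hPbdd : BddAbove {r : ℝ | ∃ Φ, Φ ∈ C ∧ (∑ m, Φ m) ∈ S ∧
      r = ∑ m, ((Φ m * Etil m).trace).re} := by
    obtain ⟨T, hT⟩ := ((isCompact_setOf_mem_and_sum_mem hCclosed hCpos hScompact).image
      (LinearMap.continuous_of_finiteDimensional (traceObjective Etil))).bddAbove
    exact ⟨T, by rintro _ ⟨Φ, hΦ, hΦS, rfl⟩; exact hT ⟨Φ, ⟨hΦ, hΦS⟩, rfl⟩⟩
  refine csSup_eq_csInf_of_forall_le_of_forall_le_add ⟨_, Φ₀, hΦ₀C, hΦ₀S, rfl⟩ ?_ fun ε hε => ?_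
  · rintro _ ⟨Φ, hΦC, hΦS, rfl⟩ _ ⟨χ, -, hχ, rfl⟩
    have := hχ Φ hΦC
    rw [sum_re_trace_mul_sub, sub_nonneg] at this
    exact this.trans (re_trace_mul_le_traceSupport hScompact χ hΦS)
  · obtain ⟨χ, hχH, hχC, hχS⟩ := exists_dualFeasible_traceSupport_le Etil hCpos hCclosed hCconv
      hcone hSpos hScompact hSconv hΦ₀C hΦ₀S fun Φ hΦ hΦS =>
        (le_csSup hPbdd ⟨Φ, hΦ, hΦS, rfl⟩).trans_lt (lt_add_of_pos_right _ hε)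
    exact ⟨_, ⟨χ, hχH, hχC, rfl⟩, hχS⟩

/-- Strong duality for restricted tester discrimination. `C ⊆ Pos_n^M` is a closed convex cone,
`S ⊆ Pos_n` a compact convex set, with the feasible set `{Φ ∈ C : Σₘ Φₘ ∈ S}` nonempty and
bounded. Then the supremum of `Σₘ ⟨Φₘ, Ẽₘ⟩` over the feasible set equals the infimum of
`D_S(χ) = sup_{φ∈S} ⟨φ, χ⟩` over all Hermitian `χ` with `Σₘ ⟨Φₘ, χ − Ẽₘ⟩ ≥ 0` for all `Φ ∈ C`. -/
theorem stmt_3 {n M : ℕ}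
    (Etil : Fin M → Matrix (Fin n) (Fin n) ℂ) (hE : ∀ m, (Etil m).PosSemidef)
    (C : Set (Fin M → Matrix (Fin n) (Fin n) ℂ))
    (hCpos : ∀ Φ ∈ C, ∀ m, (Φ m).PosSemidef)
    (hCclosed : IsClosed C) (hCconv : Convex ℝ C)
    (hCcone : ∀ Φ ∈ C, ∀ c : ℝ, 0 ≤ c → (fun m => (c : ℂ) • Φ m) ∈ C)
    (S : Set (Matrix (Fin n) (Fin n) ℂ))
    (hSpos : ∀ φ ∈ S, φ.PosSemidef) (hScompact : IsCompact S) (hSconv : Convex ℝ S)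
    (hfeas_ne : {Φ | Φ ∈ C ∧ (∑ m, Φ m) ∈ S}.Nonempty)
    (hfeas_bdd : ∃ R : ℝ, ∀ Φ ∈ {Φ | Φ ∈ C ∧ (∑ m, Φ m) ∈ S},
      ∀ m i j, ‖Φ m i j‖ ≤ R) :
    sSup {r : ℝ | ∃ Φ, Φ ∈ C ∧ (∑ m, Φ m) ∈ S ∧
        r = ∑ m, ((Φ m * Etil m).trace).re}
      = sInf {r : ℝ | ∃ χ : Matrix (Fin n) (Fin n) ℂ, χ.IsHermitian ∧
          (∀ Φ ∈ C, 0 ≤ ∑ m, ((Φ m * (χ - Etil m)).trace).re) ∧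
          r = sSup {t : ℝ | ∃ φ ∈ S, t = ((φ * χ).trace).re}} :=
  stmt_3_general Etil C hCpos hCclosed hCconv hCcone S hSpos hScompact hSconv hfeas_ne
end

section
/- Robustness dual formula: let K ⊆ Her_n be a proper convex cone (closed, pointed, with nonempty interior), F ⊆ Her_n compact with {λZ : 0 ≤ λ ≤ 1, Z ∈ F} convex and F ∩ int(K) ≠ ∅. For E ∈ Her_n with the property that δZ − E ∉ K for all δ < 1 and Z ∈ F, one has 1 + R(E) = max{⟨φ, E⟩ : φ ∈ K*, ⟨φ, Z⟩ ≤ 1 for all Z ∈ F}, where R(E) = min{λ ∈ ℝ : (1+λ)Z − E ∈ K for some Z ∈ F}. -/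
open Matrix

noncomputable def herInner {n : ℕ} (A B : selfAdjoint (Matrix (Fin n) (Fin n) ℂ)) : ℝ :=
  (((A : Matrix (Fin n) (Fin n) ℂ) * (B : Matrix (Fin n) (Fin n) ℂ)).trace).re

/-!
Weak duality is immediate: if `φ ∈ K*`, `⟨φ, Z⟩ ≤ 1` on `F` and `(1 + λ) Z - E ∈ K`, then
`⟨φ, E⟩ ≤ (1 + λ) ⟨φ, Z⟩ ≤ 1 + λ`.

For strong duality put `R = R(E)`. The hypothesis on `E` and the definition of `R` show that
`μ Z - E ∉ K` for every `μ < 1 + R` and `Z ∈ F`, so the convex set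
`T = {μ Z - E : 0 ≤ μ ≤ 1 + R, Z ∈ F}` misses the open convex set `int K`.
A separating functional `f < u` on `int K`, `u ≤ f` on `T`, is nonpositive on the cone `K`
with `u ≥ 0`, and strictly negative at a point of `F ∩ int K`; the rescaling
`-(1 + R) / (-(u + f E)) • f` is then dual feasible with value at least `1 + R` at `E`.
-/

open Topology

namespace Robustness

lemma nonpos_of_forall_mul_le {a u : ℝ} (h : ∀ t : ℝ, 0 ≤ t → t * a ≤ u) : a ≤ 0 := by
  by_contra! ha
  have := h ((|u| + 1) / a) (by positivity)
  rw [div_mul_cancel₀ _ ha.ne'] at this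
  linarith [le_abs_self u]

variable {V : Type*} [AddCommGroup V] [Module ℝ V]

/-- `R(E)` is the infimum of this set. -/
def robustnessSet (K F : Set V) (E : V) : Set ℝ :=
  {lam | 0 ≤ lam ∧ ∃ Z ∈ F, (1 + lam) • Z - E ∈ K}

section

variable {K F : Set V} {E : V}

lemma le_one_add_of_mem_robustnessSet {f : V →ₗ[ℝ] ℝ} (hfK : ∀ k ∈ K, 0 ≤ f k)
    (hfF : ∀ Z ∈ F, f Z ≤ 1) {lam : ℝ} (hlam : lam ∈ robustnessSet K F E) : f E ≤ 1 + lam := by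
  obtain ⟨hlam0, Z, hZ, hmem⟩ := hlam
  have h := hfK _ hmem
  rw [map_sub, map_smul, smul_eq_mul] at h
  nlinarith [hfF Z hZ]

lemma notMem_of_lt_one_add_sInf (hEN : ∀ δ : ℝ, δ < 1 → ∀ Z ∈ F, δ • Z - E ∉ K)
    {μ : ℝ} (hμ : μ < 1 + sInf (robustnessSet K F E)) {Z : V} (hZ : Z ∈ F) : μ • Z - E ∉ K := by
  intro hmem
  rcases lt_or_ge μ 1 with h | h
  · exact hEN μ h Z hZ hmem
  · have hlam : μ - 1 ∈ robustnessSet K F E := ⟨by linarith, Z, hZ, by rwa [add_sub_cancel]⟩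
    linarith [csInf_le ⟨0, fun _ h => h.1⟩ hlam]

lemma le_one_add_sInf_of_dual (hS : (robustnessSet K F E).Nonempty) {f : V →ₗ[ℝ] ℝ}
    (hfK : ∀ k ∈ K, 0 ≤ f k) (hfF : ∀ Z ∈ F, f Z ≤ 1) : f E ≤ 1 + sInf (robustnessSet K F E) :=
  sub_le_iff_le_add'.1 <| le_csInf hS fun _ hlam =>
    sub_le_iff_le_add'.2 (le_one_add_of_mem_robustnessSet hfK hfF hlam)

end

variable [TopologicalSpace V] [IsTopologicalAddGroup V] [ContinuousSMul ℝ V]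

lemma exists_pos_add_smul_mem_of_mem_interior {s : Set V} {x : V} (hx : x ∈ interior s)
    (v : V) : ∃ t : ℝ, 0 < t ∧ x + t • v ∈ s := by
  have hcont : Continuous fun t : ℝ => x + t • v := by fun_prop
  have hnhds : ∀ᶠ t in 𝓝[>] (0 : ℝ), x + t • v ∈ s :=
    nhdsWithin_le_nhds <| hcont.continuousAt.preimage_mem_nhds <| by
      simpa using mem_interior_iff_mem_nhds.1 hx
  obtain ⟨t, hts, ht⟩ := (hnhds.and self_mem_nhdsWithin).exists
  exact ⟨t, ht, hts⟩

lemma nonpos_and_nonneg_of_lt_on_interior {K : Set V} (hKconv : Convex ℝ K)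
    (hKcone : ∀ x ∈ K, ∀ c : ℝ, 0 ≤ c → c • x ∈ K) (hKint : (interior K).Nonempty)
    {f : V →L[ℝ] ℝ} {u : ℝ} (hf : ∀ x ∈ interior K, f x < u) :
    (∀ k ∈ K, f k ≤ 0) ∧ 0 ≤ u := by
  have hle : ∀ k ∈ K, f k ≤ u := by
    intro k hk
    have hcl : k ∈ closure (interior K) := by
      rw [hKconv.closure_interior_eq_closure_of_nonempty_interior hKint]
      exact subset_closure hk
    exact closure_minimal (fun x hx => (hf x hx).le) (isClosed_le f.continuous continuous_const) hcl
  refine ⟨fun k hk => nonpos_of_forall_mul_le (u := u) fun t ht => ?_, ?_⟩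
  · simpa using hle _ (hKcone k hk t ht)
  · obtain ⟨x, hx⟩ := hKint
    simpa using hle _ (hKcone x (interior_subset hx) 0 le_rfl)

lemma neg_of_mem_interior {K : Set V} {f : V →L[ℝ] ℝ} (hf : f ≠ 0)
    (hfK : ∀ k ∈ K, f k ≤ 0) {x : V} (hx : x ∈ interior K) : f x < 0 := by
  have hsub : f '' interior K ⊆ Set.Iic 0 := by
    rintro _ ⟨y, hy, rfl⟩
    exact hfK y (interior_subset hy)
  have := interior_maximal hsub (f.isOpenMap_of_ne_zero hf _ isOpen_interior) ⟨x, hx, rfl⟩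
  rwa [interior_Iic] at this

variable {K F : Set V} {E : V}

lemma robustnessSet_nonempty (hKcone : ∀ x ∈ K, ∀ c : ℝ, 0 ≤ c → c • x ∈ K)
    (hEN : ∀ δ : ℝ, δ < 1 → ∀ Z ∈ F, δ • Z - E ∉ K) {Z₀ : V} (hZ₀ : Z₀ ∈ F ∩ interior K) :
    (robustnessSet K F E).Nonempty := by
  obtain ⟨t, ht, hmem⟩ := exists_pos_add_smul_mem_of_mem_interior hZ₀.2 (-E)
  have hscaled : t⁻¹ • Z₀ - E ∈ K := by
    convert hKcone _ hmem t⁻¹ (inv_nonneg.2 ht.le) using 1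
    rw [smul_add, smul_smul, inv_mul_cancel₀ ht.ne']
    module
  have h1 : 1 ≤ t⁻¹ := not_lt.1 fun h => hEN _ h Z₀ hZ₀.1 hscaled
  exact ⟨t⁻¹ - 1, by linarith, Z₀, hZ₀.1, by rwa [add_sub_cancel]⟩

lemma exists_dual_ge_one_add_sInf (hKconv : Convex ℝ K)
    (hKcone : ∀ x ∈ K, ∀ c : ℝ, 0 ≤ c → c • x ∈ K)
    (hFconi : Convex ℝ {Y | ∃ lam : ℝ, 0 ≤ lam ∧ lam ≤ 1 ∧ ∃ Z ∈ F, Y = lam • Z})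
    (hEN : ∀ δ : ℝ, δ < 1 → ∀ Z ∈ F, δ • Z - E ∉ K) {Z₀ : V} (hZ₀ : Z₀ ∈ F ∩ interior K) :
    ∃ f : V →L[ℝ] ℝ, (∀ k ∈ K, 0 ≤ f k) ∧ (∀ Z ∈ F, f Z ≤ 1) ∧
      1 + sInf (robustnessSet K F E) ≤ f E := by
  set R := sInf (robustnessSet K F E)
  have hR : 0 ≤ R := le_csInf (robustnessSet_nonempty hKcone hEN hZ₀) fun _ h => h.1
  set T := (fun Y => -E + (1 + R) • Y) '' {Y | ∃ lam : ℝ, 0 ≤ lam ∧ lam ≤ 1 ∧ ∃ Z ∈ F, Y = lam • Z}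
  have hT : ∀ Z ∈ F, (1 + R) • Z - E ∈ T := fun Z hZ =>
    ⟨Z, ⟨1, zero_le_one, le_rfl, Z, hZ, (one_smul ℝ Z).symm⟩, by module⟩
  have hdisj : Disjoint (interior K) T := by
    rw [Set.disjoint_right]
    rintro _ ⟨_, ⟨lam, -, hlam1, Z, hZ, rfl⟩, rfl⟩ hint
    obtain ⟨t, ht, hmem⟩ := exists_pos_add_smul_mem_of_mem_interior hint (-Z)
    refine notMem_of_lt_one_add_sInf hEN (μ := (1 + R) * lam - t) (by nlinarith) hZ ?_
    convert hmem using 1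
    module
  obtain ⟨f, u, hfint, hfT⟩ :=
    geometric_hahn_banach_open hKconv.interior isOpen_interior (hFconi.affinity _ _) hdisj
  obtain ⟨hfK, hu⟩ := nonpos_and_nonneg_of_lt_on_interior hKconv hKcone ⟨Z₀, hZ₀.2⟩ hfint
  have hf0 : f ≠ 0 := by
    rintro rfl
    simpa using (hfint Z₀ hZ₀.2).trans_le (hfT _ (hT Z₀ hZ₀.1))
  have hfZ₀ := neg_of_mem_interior hf0 hfK hZ₀.2
  have hfF : ∀ Z ∈ F, u + f E ≤ (1 + R) * f Z := fun Z hZ => by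
    have := hfT _ (hT Z hZ)
    rw [map_sub, map_smul, smul_eq_mul] at this
    linarith
  have hs : 0 < -(u + f E) := by nlinarith [hfF Z₀ hZ₀.1]
  refine ⟨(-((1 + R) / -(u + f E))) • f, fun k hk => ?_, fun Z hZ => ?_, ?_⟩ <;>
    simp only [_root_.smul_apply, smul_eq_mul]
  · exact mul_nonneg_of_nonpos_of_nonpos (neg_nonpos.2 (by positivity)) (hfK k hk)
  · rw [neg_mul, div_mul_eq_mul_div, ← neg_div, div_le_one hs]
    linarith [hfF Z hZ]
  · rw [neg_mul, div_mul_eq_mul_div, ← neg_div, le_div_iff₀ hs]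
    nlinarith

end Robustness

instance {A : Type*} [AddCommGroup A] [StarAddMonoid A] [Module ℝ A] [StarModule ℝ A]
    [TopologicalSpace A] [ContinuousSMul ℝ A] : ContinuousSMul ℝ (selfAdjoint A) :=
  ⟨(continuous_fst.smul (continuous_subtype_val.comp continuous_snd)).subtype_mk _⟩

instance {A : Type*} [AddCommGroup A] [StarAddMonoid A] [Module ℝ A] [StarModule ℝ A]
    [FiniteDimensional ℝ A] : FiniteDimensional ℝ (selfAdjoint A) :=
  FiniteDimensional.of_injective (selfAdjoint.submodule ℝ A).subtype Subtype.coe_injective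

open scoped ComplexOrder

section HerInner

variable {n : ℕ}

lemma eq_zero_of_herInner_self_eq_zero {A : selfAdjoint (Matrix (Fin n) (Fin n) ℂ)}
    (hA : herInner A A = 0) : A = 0 := by
  have hA' : (A : Matrix (Fin n) (Fin n) ℂ)ᴴ = A := A.2
  have hnonneg := (posSemidef_conjTranspose_mul_self (A : Matrix (Fin n) (Fin n) ℂ)).trace_nonneg
  rw [hA'] at hnonneg
  have htr : ((A : Matrix (Fin n) (Fin n) ℂ) * A).trace = 0 :=
    Complex.ext hA (Complex.nonneg_iff.1 hnonneg).2.symm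
  exact Subtype.ext (trace_conjTranspose_mul_self_eq_zero_iff.1 (by rwa [hA']))

noncomputable def herInnerBilin :
    LinearMap.BilinForm ℝ (selfAdjoint (Matrix (Fin n) (Fin n) ℂ)) :=
  LinearMap.mk₂ ℝ herInner (fun _ _ _ => by simp [herInner, add_mul])
    (fun _ _ _ => by simp [herInner, selfAdjoint.val_smul])
    (fun _ _ _ => by simp [herInner, mul_add])
    (fun _ _ _ => by simp [herInner, selfAdjoint.val_smul])

lemma herInnerBilin_nondegenerate : (herInnerBilin (n := n)).Nondegenerate :=
  ⟨fun A hA => eq_zero_of_herInner_self_eq_zero (hA A),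
    fun B hB => eq_zero_of_herInner_self_eq_zero (hB B)⟩

lemma exists_herInner_eq_of_linearMap (f : selfAdjoint (Matrix (Fin n) (Fin n) ℂ) →ₗ[ℝ] ℝ) :
    ∃ φ, ∀ A, herInner φ A = f A :=
  ⟨(herInnerBilin.toDual herInnerBilin_nondegenerate).symm f, fun A =>
    LinearMap.BilinForm.apply_toDual_symm_apply (hB := herInnerBilin_nondegenerate) f A⟩

end HerInner

open Robustness

theorem stmt_14_general {n : ℕ}
    (K : Set (selfAdjoint (Matrix (Fin n) (Fin n) ℂ)))
    (hKconv : Convex ℝ K)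
    (hKcone : ∀ x ∈ K, ∀ c : ℝ, 0 ≤ c → c • x ∈ K)
    (F : Set (selfAdjoint (Matrix (Fin n) (Fin n) ℂ)))
    (hFconi : Convex ℝ {Y | ∃ lam : ℝ, 0 ≤ lam ∧ lam ≤ 1 ∧ ∃ Z ∈ F, Y = lam • Z})
    (hFK : (F ∩ interior K).Nonempty)
    (E : selfAdjoint (Matrix (Fin n) (Fin n) ℂ))
    (hEN : ∀ δ : ℝ, δ < 1 → ∀ Z ∈ F, δ • Z - E ∉ K)
    (R : ℝ) (hR : R = sInf {lam : ℝ | 0 ≤ lam ∧ ∃ Z ∈ F, (1 + lam) • Z - E ∈ K}) :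
    IsGreatest {r : ℝ | ∃ φ, (∀ k ∈ K, 0 ≤ herInner φ k) ∧
      (∀ Z ∈ F, herInner φ Z ≤ 1) ∧ r = herInner φ E} (1 + R) := by
  obtain ⟨Z₀, hZ₀⟩ := hFK
  subst hR
  have hweak (ψ) (hψK : ∀ k ∈ K, 0 ≤ herInner ψ k) (hψF : ∀ Z ∈ F, herInner ψ Z ≤ 1) :
      herInner ψ E ≤ 1 + sInf (robustnessSet K F E) :=
    le_one_add_sInf_of_dual (f := herInnerBilin ψ) (robustnessSet_nonempty hKcone hEN hZ₀) hψK hψF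
  obtain ⟨f, hfK, hfF, hfE⟩ := exists_dual_ge_one_add_sInf hKconv hKcone hFconi hEN hZ₀
  obtain ⟨φ, hφ⟩ := exists_herInner_eq_of_linearMap f.toLinearMap
  have hφK : ∀ k ∈ K, 0 ≤ herInner φ k := by simpa [hφ] using hfK
  have hφF : ∀ Z ∈ F, herInner φ Z ≤ 1 := by simpa [hφ] using hfF
  have hφE : 1 + sInf (robustnessSet K F E) ≤ herInner φ E := by simpa [hφ] using hfE
  refine ⟨⟨φ, hφK, hφF, (le_antisymm (hweak φ hφK hφF) hφE).symm⟩, ?_⟩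
  rintro _ ⟨ψ, hψK, hψF, rfl⟩
  exact hweak ψ hψK hψF

/-- Robustness dual formula: let `K ⊆ Her_n` be a proper convex cone (closed, pointed, with
nonempty interior), `F ⊆ Her_n` compact with `{λZ : 0 ≤ λ ≤ 1, Z ∈ F}` convex and
`F ∩ int(K) ≠ ∅`. For `E` with `δZ − E ∉ K` for all `δ < 1` and `Z ∈ F`, one has
`1 + R(E) = max{⟨φ, E⟩ : φ ∈ K*, ⟨φ, Z⟩ ≤ 1 ∀Z ∈ F}`, where
`R(E) = inf{λ ≥ 0 : (1+λ)Z − E ∈ K for some Z ∈ F}`. -/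
theorem stmt_14 {n : ℕ}
    (K : Set (selfAdjoint (Matrix (Fin n) (Fin n) ℂ)))
    (hKclosed : IsClosed K) (hKconv : Convex ℝ K)
    (hKcone : ∀ x ∈ K, ∀ c : ℝ, 0 ≤ c → c • x ∈ K)
    (hKpointed : ∀ x ∈ K, -x ∈ K → x = 0)
    (hKint : (interior K).Nonempty)
    (F : Set (selfAdjoint (Matrix (Fin n) (Fin n) ℂ))) (hFcomp : IsCompact F)
    (hFconi : Convex ℝ {Y | ∃ lam : ℝ, 0 ≤ lam ∧ lam ≤ 1 ∧ ∃ Z ∈ F, Y = lam • Z})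
    (hFK : (F ∩ interior K).Nonempty)
    (E : selfAdjoint (Matrix (Fin n) (Fin n) ℂ))
    (hEN : ∀ δ : ℝ, δ < 1 → ∀ Z ∈ F, δ • Z - E ∉ K)
    (R : ℝ) (hR : R = sInf {lam : ℝ | 0 ≤ lam ∧ ∃ Z ∈ F, (1 + lam) • Z - E ∈ K}) :
    IsGreatest {r : ℝ | ∃ φ, (∀ k ∈ K, 0 ≤ herInner φ k) ∧
      (∀ Z ∈ F, herInner φ Z ≤ 1) ∧ r = herInner φ E} (1 + R) :=
  stmt_14_general K hKconv hKcone F hFconi hFK E hEN R hR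
end

section
/- Robustness as maximal advantage ratio: under the hypotheses of the robustness dual formula, and for any set X whose generated cone equals K*, one has max over φ ∈ X \ {0} of ⟨φ, E⟩ / (max_{Z∈F} ⟨φ, Z⟩) = 1 + R^F_K(E), where the denominators are strictly positive because F ∩ int(K) ≠ ∅. -/
open Matrix

section Aux

variable {n : ℕ}

local notation "V" => selfAdjoint (Matrix (Fin n) (Fin n) ℂ)

noncomputable def herCoe (n : ℕ) :
    selfAdjoint (Matrix (Fin n) (Fin n) ℂ) →ₗ[ℝ] Matrix (Fin n) (Fin n) ℂ where
  toFun := Subtype.val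
  map_add' _ _ := rfl
  map_smul' _ _ := rfl

instance : ContinuousSMul ℝ V :=
  Topology.IsInducing.continuousSMul (Topology.IsInducing.subtypeVal) continuous_id rfl

instance : FiniteDimensional ℝ V :=
  FiniteDimensional.of_injective (herCoe n) Subtype.coe_injective

instance : FirstCountableTopology (Matrix (Fin n) (Fin n) ℂ) :=
  inferInstanceAs (FirstCountableTopology (Fin n → Fin n → ℂ))

instance : FirstCountableTopology V :=
  Topology.IsInducing.subtypeVal.firstCountableTopology

lemma herInner_add_right (A B C : V) : herInner A (B + C) = herInner A B + herInner A C := by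
  simp [herInner, mul_add]
lemma herInner_add_left (A B C : V) : herInner (A + B) C = herInner A C + herInner B C := by
  simp [herInner, add_mul]
lemma herInner_smul_right (A B : V) (r : ℝ) : herInner A (r • B) = r * herInner A B := by
  simp [herInner, selfAdjoint.val_smul, mul_smul_comm]
lemma herInner_smul_left (A B : V) (r : ℝ) : herInner (r • A) B = r * herInner A B := by
  simp [herInner, selfAdjoint.val_smul, smul_mul_assoc]
lemma herInner_sub_right (A B C : V) : herInner A (B - C) = herInner A B - herInner A C := by
  simp [herInner, mul_sub]
lemma herInner_neg_right (A B : V) : herInner A (-B) = - herInner A B := by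
  simp [herInner]

lemma herInner_self_pos (A : V) (hA : A ≠ 0) : 0 < herInner A A := by
  have hAs : (A : Matrix (Fin n) (Fin n) ℂ)ᴴ = (A : Matrix (Fin n) (Fin n) ℂ) := A.prop
  have key : herInner A A = ∑ j, ∑ i, Complex.normSq ((A : Matrix (Fin n) (Fin n) ℂ) i j) := by
    rw [herInner, show ((A : Matrix (Fin n) (Fin n) ℂ) * (A : Matrix (Fin n) (Fin n) ℂ))
        = ((A : Matrix (Fin n) (Fin n) ℂ)ᴴ * (A : Matrix (Fin n) (Fin n) ℂ)) by rw [hAs]]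
    rw [Matrix.trace]
    simp only [Matrix.diag_apply, Matrix.mul_apply, Matrix.conjTranspose_apply]
    rw [Complex.re_sum]
    congr 1; ext j
    rw [Complex.re_sum]
    congr 1; ext i
    rw [Complex.star_def, mul_comm, Complex.mul_conj, Complex.ofReal_re]
  rw [key]
  have h0 : (A : Matrix (Fin n) (Fin n) ℂ) ≠ 0 := fun h => hA (Subtype.ext h)
  obtain ⟨i, j, hij⟩ : ∃ i j, (A : Matrix (Fin n) (Fin n) ℂ) i j ≠ 0 := by
    by_contra h; push_neg at h; exact h0 (by ext i j; exact h i j)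
  have hnn : ∀ j ∈ Finset.univ, (0:ℝ) ≤ ∑ i, Complex.normSq ((A : Matrix (Fin n) (Fin n) ℂ) i j) :=
    fun j _ => Finset.sum_nonneg fun i _ => Complex.normSq_nonneg _
  refine Finset.sum_pos' hnn ⟨j, Finset.mem_univ _, ?_⟩
  refine Finset.sum_pos' (fun i _ => Complex.normSq_nonneg _) ⟨i, Finset.mem_univ _, ?_⟩
  exact Complex.normSq_pos.2 hij

noncomputable def herDual (n : ℕ) :
    selfAdjoint (Matrix (Fin n) (Fin n) ℂ) →ₗ[ℝ]
      Module.Dual ℝ (selfAdjoint (Matrix (Fin n) (Fin n) ℂ)) where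
  toFun A :=
    { toFun := fun B => herInner A B
      map_add' := herInner_add_right A
      map_smul' := fun r B => herInner_smul_right A B r }
  map_add' A B := by ext C; exact herInner_add_left A B C
  map_smul' r A := by ext C; exact herInner_smul_left A C r

lemma herDual_surjective : Function.Surjective (herDual n) := by
  have hinj : Function.Injective (herDual n) := by
    intro A B h
    have h2 : herDual n (A - B) = 0 := by rw [map_sub, h, sub_self]
    have h3 : herInner (A - B) (A - B) = 0 := by
      have := congrFun (congrArg DFunLike.coe h2) (A - B)
      simpa [herDual] using this
    by_contra hne
    have : A - B ≠ 0 := fun hs => hne (by rwa [sub_eq_zero] at hs)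
    exact absurd h3 (ne_of_gt (herInner_self_pos _ this))
  exact (LinearMap.injective_iff_surjective_of_finrank_eq_finrank
    Subspace.dual_finrank_eq.symm).mp hinj

/-- continuity of the pairing in the second variable -/
lemma herInner_continuous (A : V) : Continuous fun B => herInner A B :=
  (herDual n A).continuous_of_finiteDimensional

lemma exists_pos_of_eventually {P : ℝ → Prop} (h : ∀ᶠ s in nhds (0:ℝ), P s) :
    ∃ s : ℝ, 0 < s ∧ P s := by
  have h2 : ∀ᶠ s in nhdsWithin (0:ℝ) (Set.Ioi 0), P s :=
    h.filter_mono nhdsWithin_le_nhds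
  obtain ⟨s, hP, hs⟩ := (h2.and self_mem_nhdsWithin).exists
  exact ⟨s, hs, hP⟩

/-- positivity of a nonzero dual-cone element on interior points -/
lemma herInner_pos_interior {K : Set V} (φ W : V)
    (hφ : ∀ k ∈ K, 0 ≤ herInner φ k) (hφ0 : φ ≠ 0) (hW : W ∈ interior K) :
    0 < herInner φ W := by
  rcases lt_or_eq_of_le (hφ W (interior_subset hW)) with h | h
  · exact h
  exfalso
  have hle : ∀ v : V, herInner φ v ≤ 0 := by
    intro v
    have hcont : Continuous fun s : ℝ => W - s • v :=
      continuous_const.sub (continuous_id.smul continuous_const)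
    have htd := hcont.tendsto 0
    rw [show W - (0:ℝ) • v = W by rw [zero_smul, sub_zero]] at htd
    have hev : ∀ᶠ s in nhds (0:ℝ), W - s • v ∈ interior K :=
      htd.eventually_mem (isOpen_interior.mem_nhds hW)
    obtain ⟨s, hs, hsK⟩ := exists_pos_of_eventually hev
    have := hφ _ (interior_subset hsK)
    rw [herInner_sub_right, herInner_smul_right, ← h] at this
    nlinarith
  exact absurd (hle φ) (not_le.2 (herInner_self_pos φ hφ0))

end Aux

open Pointwise in
set_option maxHeartbeats 1000000 in
/-- Robustness as maximal advantage ratio: under the hypotheses of the robustness dual formula,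
for any set `X` whose generated cone equals `K*`, the maximum over `φ ∈ X \ {0}` of
`⟨φ, E⟩ / (max_{Z∈F} ⟨φ, Z⟩)` equals `1 + R^F_K(E)`. -/
theorem stmt_15 {n : ℕ}
    (K : Set (selfAdjoint (Matrix (Fin n) (Fin n) ℂ)))
    (hKclosed : IsClosed K) (hKconv : Convex ℝ K)
    (hKcone : ∀ x ∈ K, ∀ c : ℝ, 0 ≤ c → c • x ∈ K)
    (hKpointed : ∀ x ∈ K, -x ∈ K → x = 0)
    (hKint : (interior K).Nonempty)
    (F : Set (selfAdjoint (Matrix (Fin n) (Fin n) ℂ))) (hFcomp : IsCompact F)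
    (hFconi : Convex ℝ {Y | ∃ lam : ℝ, 0 ≤ lam ∧ lam ≤ 1 ∧ ∃ Z ∈ F, Y = lam • Z})
    (hFK : (F ∩ interior K).Nonempty)
    (E : selfAdjoint (Matrix (Fin n) (Fin n) ℂ))
    (hEN : ∀ δ : ℝ, δ < 1 → ∀ Z ∈ F, δ • Z - E ∉ K)
    (R : ℝ) (hR : R = sInf {lam : ℝ | 0 ≤ lam ∧ ∃ Z ∈ F, (1 + lam) • Z - E ∈ K})
    (X : Set (selfAdjoint (Matrix (Fin n) (Fin n) ℂ)))
    (hX : {y | ∃ lam : ℝ, 0 ≤ lam ∧ ∃ φ ∈ X, y = lam • φ}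
      = {φ | ∀ k ∈ K, 0 ≤ herInner φ k}) :
    IsGreatest {r : ℝ | ∃ φ ∈ X, φ ≠ 0 ∧
      r = herInner φ E / sSup {t : ℝ | ∃ Z ∈ F, t = herInner φ Z}} (1 + R) := by
  classical
  obtain ⟨W, hWF, hWint⟩ := hFK
  set Λ : Set ℝ := {lam : ℝ | 0 ≤ lam ∧ ∃ Z ∈ F, (1 + lam) • Z - E ∈ K} with hΛdef
  set Fhat : Set (selfAdjoint (Matrix (Fin n) (Fin n) ℂ)) :=
    {Y | ∃ lam : ℝ, 0 ≤ lam ∧ lam ≤ 1 ∧ ∃ Z ∈ F, Y = lam • Z} with hFhatdef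
  -- K is closed under addition
  have hKadd : ∀ x ∈ K, ∀ y ∈ K, x + y ∈ K := by
    intro x hx y hy
    have h2 := hKconv hx hy (by norm_num : (0:ℝ) ≤ 1/2) (by norm_num : (0:ℝ) ≤ 1/2)
      (by norm_num)
    have h3 := hKcone _ h2 2 (by norm_num)
    rwa [smul_add, smul_smul, smul_smul, show (2:ℝ)*(1/2) = 1 by norm_num, one_smul,
      one_smul] at h3
  have h0K : (0 : selfAdjoint (Matrix (Fin n) (Fin n) ℂ)) ∈ K := by
    have := hKcone W (interior_subset hWint) 0 le_rfl
    rwa [zero_smul] at this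
  -- Λ is nonempty
  have hΛne : Λ.Nonempty := by
    have hcont : Continuous fun s : ℝ => W - s • E :=
      continuous_const.sub (continuous_id.smul continuous_const)
    have htd := hcont.tendsto 0
    rw [show W - (0:ℝ) • E = W by rw [zero_smul, sub_zero]] at htd
    have h1 : ∀ᶠ s in nhds (0:ℝ), s < 1 :=
      Filter.Tendsto.eventually_lt_const zero_lt_one Filter.tendsto_id
    have hev := (htd.eventually_mem (isOpen_interior.mem_nhds hWint)).and h1
    obtain ⟨s, hs0, hsK, hs1⟩ := exists_pos_of_eventually hev
    refine ⟨1/s - 1, ⟨?_, W, hWF, ?_⟩⟩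
    · have h2 : (1:ℝ) ≤ 1/s := by rw [le_div_iff₀ hs0]; linarith
      linarith
    · have hK1 : W - s • E ∈ K := interior_subset hsK
      have h3 := hKcone _ hK1 (1/s) (by positivity)
      rw [smul_sub, smul_smul, one_div, inv_mul_cancel₀ (ne_of_gt hs0), one_smul] at h3
      rw [show 1 + (1/s - 1) = 1/s by ring]
      rw [one_div]
      exact h3
  have hΛbdd : BddBelow Λ := ⟨0, fun lam h => h.1⟩
  have hR0 : 0 ≤ R := hR ▸ le_csInf hΛne fun lam h => h.1
  have ht0 : (0:ℝ) < 1 + R := by linarith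
  -- Λ is closed
  have hΛclosed : IsClosed Λ := by
    rw [← isSeqClosed_iff_isClosed]
    intro u lam hu hlim
    choose h0 Zs hZsF hZsK using hu
    obtain ⟨Z', hZ'F, σ, hσ, hZtend⟩ := hFcomp.tendsto_subseq hZsF
    have hulim : Filter.Tendsto (fun j => u (σ j)) Filter.atTop (nhds lam) :=
      hlim.comp hσ.tendsto_atTop
    have hy : Filter.Tendsto (fun j => (1 + u (σ j)) • (Zs ∘ σ) j - E) Filter.atTop
        (nhds ((1 + lam) • Z' - E)) :=
      ((tendsto_const_nhds.add hulim).smul hZtend).sub tendsto_const_nhds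
    refine ⟨ge_of_tendsto hulim (Filter.Eventually.of_forall fun j => h0 (σ j)), Z', hZ'F,
      hKclosed.mem_of_tendsto hy (Filter.Eventually.of_forall fun j => hZsK (σ j))⟩
  have hRΛ : R ∈ Λ := by rw [hR]; exact hΛclosed.csInf_mem hΛne hΛbdd
  obtain ⟨-, Z₀, hZ₀F, hZ₀K⟩ := hRΛ
  -- nothing below 1 + R is feasible
  have hnotμ : ∀ μ : ℝ, μ < 1 + R → ∀ Z ∈ F, μ • Z - E ∉ K := by
    intro μ hμ Z hZ hcon
    rcases lt_or_ge μ 1 with h1 | h1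
    · exact hEN μ h1 Z hZ hcon
    · have hmem : μ - 1 ∈ Λ :=
        ⟨by linarith, Z, hZ, by rw [show 1 + (μ-1) = μ by ring]; exact hcon⟩
      have h2 : R ≤ μ - 1 := hR ▸ csInf_le hΛbdd hmem
      linarith
  -- the convex body D
  set D : Set (selfAdjoint (Matrix (Fin n) (Fin n) ℂ)) := ((1 + R) • Fhat) - K with hDdef
  have hDconv : Convex ℝ D := (hFconi.smul (1 + R)).sub hKconv
  have h0Fhat : (0 : selfAdjoint (Matrix (Fin n) (Fin n) ℂ)) ∈ Fhat :=
    ⟨0, le_rfl, zero_le_one, W, hWF, (zero_smul ℝ W).symm⟩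
  have hmemFhat : ∀ Z ∈ F, Z ∈ Fhat := fun Z hZ =>
    ⟨1, zero_le_one, le_rfl, Z, hZ, (one_smul ℝ Z).symm⟩
  -- negative interior points of K are interior points of D
  have hnegint : ∀ x, x ∈ interior K → -x ∈ interior D := by
    intro x hx
    have hU : IsOpen (-(interior K)) := isOpen_interior.neg
    have hsub : -(interior K) ⊆ D := by
      intro y hy
      have h1 : -y ∈ interior K := Set.mem_neg.mp hy
      refine Set.mem_sub.mpr ⟨(1 + R) • 0, Set.smul_mem_smul_set h0Fhat, -y,
        interior_subset h1, ?_⟩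
      rw [smul_zero, zero_sub, neg_neg]
    exact interior_maximal hsub hU (Set.neg_mem_neg.mpr hx)
  have hw₀ : -W ∈ interior D := hnegint W hWint
  -- E is in D but not in its interior
  have hED : E ∈ D := by
    refine Set.mem_sub.mpr ⟨(1 + R) • Z₀, Set.smul_mem_smul_set (hmemFhat Z₀ hZ₀F),
      (1 + R) • Z₀ - E, hZ₀K, ?_⟩
    rw [sub_sub_cancel]
  have hEnotint : E ∉ interior D := by
    intro hEint
    have hcont : Continuous fun δ : ℝ => E + δ • W :=
      continuous_const.add (continuous_id.smul continuous_const)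
    have htd := hcont.tendsto 0
    rw [show E + (0:ℝ) • W = E by rw [zero_smul, add_zero]] at htd
    obtain ⟨δ, hδ, hmem⟩ := exists_pos_of_eventually
      (htd.eventually_mem (isOpen_interior.mem_nhds hEint))
    obtain ⟨a, ha, k, hk, hak⟩ := Set.mem_sub.mp (interior_subset hmem)
    obtain ⟨c, hc, rfl⟩ := Set.mem_smul_set.mp ha
    obtain ⟨lam, hlam0, hlam1, Z, hZF, rfl⟩ := hc
    -- δ • W ∈ interior K
    have hδW : δ • W ∈ interior K := by
      have hUo : IsOpen ((fun x : selfAdjoint (Matrix (Fin n) (Fin n) ℂ) => δ⁻¹ • x) ⁻¹'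
          interior K) := isOpen_interior.preimage (continuous_const_smul δ⁻¹)
      have hUK : ((fun x : selfAdjoint (Matrix (Fin n) (Fin n) ℂ) => δ⁻¹ • x) ⁻¹'
          interior K) ⊆ K := by
        intro x hx
        have h2 : x = δ • (δ⁻¹ • x) := by
          rw [smul_smul, mul_inv_cancel₀ (ne_of_gt hδ), one_smul]
        rw [h2]; exact hKcone _ (interior_subset hx) δ hδ.le
      refine interior_maximal hUK hUo ?_
      show δ⁻¹ • δ • W ∈ interior K
      rw [smul_smul, inv_mul_cancel₀ (ne_of_gt hδ), one_smul]
      exact hWint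
    have h' : (1 + R) • (lam • Z) - E = k + δ • W := by
      rw [sub_eq_iff_eq_add] at hak ⊢
      rw [hak]; abel
    -- k + δ • W ∈ interior K
    have hintK2 : k + δ • W ∈ interior K := by
      have hUo : IsOpen ((fun x : selfAdjoint (Matrix (Fin n) (Fin n) ℂ) => x - k) ⁻¹'
          interior K) := isOpen_interior.preimage (continuous_id.sub continuous_const)
      have hUK : ((fun x : selfAdjoint (Matrix (Fin n) (Fin n) ℂ) => x - k) ⁻¹'
          interior K) ⊆ K := by
        intro x hx
        have h2 : x = (x - k) + k := (sub_add_cancel x k).symm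
        rw [h2]; exact hKadd _ (interior_subset hx) _ hk
      refine interior_maximal hUK hUo ?_
      show (k + δ • W) - k ∈ interior K
      rw [add_sub_cancel_left]
      exact hδW
    have hintE : ((1 + R) * lam) • Z - E ∈ interior K := by
      rw [← smul_smul]
      rw [h']
      exact hintK2
    have hεcont : Continuous fun ε : ℝ => ((1 + R) * lam - ε) • Z - E :=
      ((continuous_const.sub continuous_id).smul continuous_const).sub continuous_const
    have hεtd := hεcont.tendsto 0
    rw [show ((1 + R) * lam - 0) • Z - E = ((1 + R) * lam) • Z - E by rw [sub_zero]] at hεtd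
    obtain ⟨ε, hε, hεmem⟩ := exists_pos_of_eventually
      (hεtd.eventually_mem (isOpen_interior.mem_nhds hintE))
    have hμt : (1 + R) * lam - ε < 1 + R := by
      have h2 : (1 + R) * lam ≤ 1 + R := mul_le_of_le_one_right ht0.le hlam1
      linarith
    exact hnotμ _ hμt Z hZF (interior_subset hεmem)
  -- separation
  obtain ⟨f, hf⟩ := geometric_hahn_banach_open_point hDconv.interior isOpen_interior hEnotint
  have hfD : ∀ y ∈ D, f y ≤ f E := by
    intro y hy
    have hcont : Continuous fun a : ℝ => f (a • (-W) + (1 - a) • y) :=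
      f.continuous.comp ((continuous_id.smul continuous_const).add
        ((continuous_const.sub continuous_id).smul continuous_const))
    have htd := hcont.tendsto 0
    rw [show (0:ℝ) • (-W) + ((1:ℝ) - 0) • y = y by
      rw [zero_smul, zero_add, sub_zero, one_smul]] at htd
    have htd' : Filter.Tendsto (fun a : ℝ => f (a • (-W) + (1 - a) • y))
        (nhdsWithin 0 (Set.Ioi 0)) (nhds (f y)) := htd.mono_left nhdsWithin_le_nhds
    refine le_of_tendsto htd' ?_
    filter_upwards [Ioo_mem_nhdsGT_of_mem
      (show (0:ℝ) ∈ Set.Ico (0:ℝ) 1 by constructor <;> norm_num)] with a ha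
    exact (hf _ (hDconv.combo_interior_self_mem_interior hw₀ hy ha.1
      (by linarith [ha.2]) (by ring))).le
  -- Riesz representation
  obtain ⟨φ, hφrep⟩ := herDual_surjective (n := n) f.toLinearMap
  have hrep : ∀ y, herInner φ y = f y := fun y => DFunLike.congr_fun hφrep y
  have hφ0 : φ ≠ 0 := by
    rintro rfl
    have h1 : ∀ y, f y = 0 := fun y => by rw [← hrep]; simp [herInner]
    have h2 := hf _ hw₀
    rw [h1, h1] at h2
    exact lt_irrefl 0 h2
  -- φ is in the dual cone
  have hφK : ∀ k ∈ K, 0 ≤ herInner φ k := by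
    intro k hk
    by_contra hneg
    push_neg at hneg
    set c : ℝ := (|f E| + 1) / (-(herInner φ k)) with hc
    have hc0 : 0 < c := div_pos (by positivity) (by linarith)
    have hyD : (1 + R) • (0 : selfAdjoint (Matrix (Fin n) (Fin n) ℂ)) - c • k ∈ D :=
      Set.mem_sub.mpr ⟨(1 + R) • 0, Set.smul_mem_smul_set h0Fhat, c • k,
        hKcone k hk c hc0.le, rfl⟩
    have h2 := hfD _ hyD
    rw [map_sub, _root_.map_smul, _root_.map_smul, map_zero, smul_zero, zero_sub] at h2
    have h3 : -(c • f k) ≤ f E := h2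
    rw [smul_eq_mul, ← hrep] at h3
    have h4 : c * (-(herInner φ k)) = |f E| + 1 := by
      rw [hc]
      exact div_mul_cancel₀ _ (ne_of_gt (by linarith : (0:ℝ) < -herInner φ k))
    have h5 : f E ≤ |f E| := le_abs_self _
    nlinarith
  -- key inequality from the supporting hyperplane
  have hkey : ∀ Z ∈ F, (1 + R) * herInner φ Z ≤ herInner φ E := by
    intro Z hZ
    have hyD : (1 + R) • Z - (0 : selfAdjoint (Matrix (Fin n) (Fin n) ℂ)) ∈ D :=
      Set.mem_sub.mpr ⟨(1 + R) • Z, Set.smul_mem_smul_set (hmemFhat Z hZ), 0, h0K, rfl⟩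
    have h2 := hfD _ hyD
    rw [sub_zero, _root_.map_smul, smul_eq_mul] at h2
    rw [hrep, hrep]
    exact h2
  -- upper bound from feasibility
  have hEbound : ∀ ψ : selfAdjoint (Matrix (Fin n) (Fin n) ℂ),
      (∀ k ∈ K, 0 ≤ herInner ψ k) → herInner ψ E ≤ (1 + R) * herInner ψ Z₀ := by
    intro ψ hψ
    have h2 := hψ _ hZ₀K
    rw [herInner_sub_right, herInner_smul_right] at h2
    linarith
  -- decompose φ through X
  have hφmem : φ ∈ {y | ∃ lam : ℝ, 0 ≤ lam ∧ ∃ ψ ∈ X, y = lam • ψ} := by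
    rw [hX]; exact hφK
  obtain ⟨lam', hlam'0, φ', hφ'X, hφeq⟩ := hφmem
  have hlam'pos : 0 < lam' := by
    rcases lt_or_eq_of_le hlam'0 with h | h
    · exact h
    · exfalso; apply hφ0; rw [hφeq, ← h, zero_smul]
  have hφ'0 : φ' ≠ 0 := by
    rintro rfl; apply hφ0; rw [hφeq, smul_zero]
  have hφ'K : ∀ k ∈ K, 0 ≤ herInner φ' k := by
    intro k hk
    have h2 := hφK k hk
    rw [hφeq, herInner_smul_left] at h2
    exact nonneg_of_mul_nonneg_right h2 hlam'pos
  have hkey' : ∀ Z ∈ F, (1 + R) * herInner φ' Z ≤ herInner φ' E := by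
    intro Z hZ
    have h2 := hkey Z hZ
    rw [hφeq, herInner_smul_left, herInner_smul_left,
      show (1 + R) * (lam' * herInner φ' Z) = lam' * ((1 + R) * herInner φ' Z) by ring] at h2
    exact le_of_mul_le_mul_left h2 hlam'pos
  -- facts about the suprema
  have hfacts : ∀ ψ : selfAdjoint (Matrix (Fin n) (Fin n) ℂ), ψ ∈ X → ψ ≠ 0 →
      (∀ k ∈ K, 0 ≤ herInner ψ k) →
      0 < sSup {t : ℝ | ∃ Z ∈ F, t = herInner ψ Z} ∧
      herInner ψ E / sSup {t : ℝ | ∃ Z ∈ F, t = herInner ψ Z} ≤ 1 + R := by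
    intro ψ hψX hψ0 hψK
    set S : Set ℝ := {t : ℝ | ∃ Z ∈ F, t = herInner ψ Z} with hSdef
    have hSeq : S = (fun Z => herInner ψ Z) '' F := by
      ext s; constructor
      · rintro ⟨Z, hZ, rfl⟩; exact ⟨Z, hZ, rfl⟩
      · rintro ⟨Z, hZ, rfl⟩; exact ⟨Z, hZ, rfl⟩
    have hbdd : BddAbove S := by
      rw [hSeq]; exact (hFcomp.image (herInner_continuous ψ)).bddAbove
    have hSne : S.Nonempty := ⟨herInner ψ W, W, hWF, rfl⟩
    have hMpos : 0 < sSup S :=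
      lt_of_lt_of_le (herInner_pos_interior ψ W hψK hψ0 hWint)
        (le_csSup hbdd ⟨W, hWF, rfl⟩)
    have hEub : herInner ψ E ≤ (1 + R) * sSup S := by
      calc herInner ψ E ≤ (1 + R) * herInner ψ Z₀ := hEbound ψ hψK
        _ ≤ (1 + R) * sSup S :=
          mul_le_mul_of_nonneg_left (le_csSup hbdd ⟨Z₀, hZ₀F, rfl⟩) ht0.le
    exact ⟨hMpos, (div_le_iff₀ hMpos).mpr (by linarith)⟩
  constructor
  · -- membership : the maximum is attained at φ'
    refine ⟨φ', hφ'X, hφ'0, ?_⟩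
    obtain ⟨hMpos, -⟩ := hfacts φ' hφ'X hφ'0 hφ'K
    set S : Set ℝ := {t : ℝ | ∃ Z ∈ F, t = herInner φ' Z} with hSdef
    have hSne : S.Nonempty := ⟨herInner φ' W, W, hWF, rfl⟩
    have hbdd : BddAbove S := by
      have hSeq : S = (fun Z => herInner φ' Z) '' F := by
        ext s; constructor
        · rintro ⟨Z, hZ, rfl⟩; exact ⟨Z, hZ, rfl⟩
        · rintro ⟨Z, hZ, rfl⟩; exact ⟨Z, hZ, rfl⟩
      rw [hSeq]; exact (hFcomp.image (herInner_continuous φ')).bddAbove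
    have hup : (1 + R) * sSup S ≤ herInner φ' E := by
      have h2 : sSup S ≤ herInner φ' E / (1 + R) := by
        refine csSup_le hSne ?_
        rintro s ⟨Z, hZ, rfl⟩
        rw [le_div_iff₀ ht0]
        have := hkey' Z hZ
        linarith
      rw [le_div_iff₀ ht0] at h2
      linarith
    have hlow : herInner φ' E ≤ (1 + R) * sSup S := by
      calc herInner φ' E ≤ (1 + R) * herInner φ' Z₀ := hEbound φ' hφ'K
        _ ≤ (1 + R) * sSup S :=
          mul_le_mul_of_nonneg_left (le_csSup hbdd ⟨Z₀, hZ₀F, rfl⟩) ht0.le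
    have heq : herInner φ' E = (1 + R) * sSup S := le_antisymm hlow hup
    rw [heq, mul_div_assoc, div_self (ne_of_gt hMpos), mul_one]
  · -- upper bound
    rintro r ⟨ψ, hψX, hψ0, rfl⟩
    have hψK : ∀ k ∈ K, 0 ≤ herInner ψ k := by
      have : ψ ∈ {y | ∃ lam : ℝ, 0 ≤ lam ∧ ∃ χ ∈ X, y = lam • χ} :=
        ⟨1, zero_le_one, ψ, hψX, (one_smul ℝ ψ).symm⟩
      rw [hX] at this
      exact this
    exact (hfacts ψ hψX hψ0 hψK).2
end
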